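/- arXiv:2512.17448 — 2 statements merged into one kernel-verified Lean document; each statement's English description precedes it below -/
import Mathlib

section
/- Fix γ > 0 and 1 ≤ p ≤ ∞. For every f ∈ C^∞([0,γ]) there exists a sequence of finite sets F(n) ⊂ ℝ, n ≥ 1, such that: (1) 2 ≤ #F(n) < ∞ for every n; (2) E_{F(n)} ⊆ E_{F(n+1)} for every n; (3) f lies in the closure, with respect to ρ_p, of ⋃_{n=1}^∞ E_{F(n)}. -/
open MeasureTheory Set Filter
open scoped ENNReal Topology

/-- The `L^p` distance of two functions over the interval `[a, b]`. -/
noncomputable def rho (a b : ℝ) (p : ℝ≥0∞) (f g : ℝ → ℝ) : ℝ :=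
  (eLpNorm (fun x => f x - g x) p (volume.restrict (Icc a b))).toReal

/-- The set `E_F` of smooth functions of the form `Σ aₙ/n! xⁿ` with all
coefficients `aₙ` in the finite set `F`. -/
def EFsp (F : Finset ℝ) : Set (ℝ → ℝ) :=
  {f | ContDiff ℝ (⊤ : ℕ∞) f ∧ ∃ a : ℕ → ℝ, (∀ n, a n ∈ F) ∧
    ∀ x : ℝ, HasSum (fun n : ℕ => a n / (Nat.factorial n : ℝ) * x ^ n) (f x)}

/-!
By Weierstrass, `f` is a uniform, hence `ρ_p`, limit on `[0, γ]` of polynomials `q_k`, and a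
polynomial `Σ cₙ xⁿ` lies in `E_F` for `F = {0} ∪ {n! cₙ}`. Taking for `F(n)` the union of `{0, 1}`
with the coefficient sets of `q_0, …, q_n` gives an increasing sequence of finite sets whose
`E_{F(n)}` contain all the approximants.
-/

open Polynomial

lemma EFsp_mono {F F' : Finset ℝ} (h : F ⊆ F') : EFsp F ⊆ EFsp F' := by
  rintro g ⟨hg, a, ha, hs⟩
  exact ⟨hg, a, fun n => h (ha n), hs⟩

lemma Polynomial.exists_eval_mem_EFsp (q : ℝ[X]) :
    ∃ F : Finset ℝ, (fun x => q.eval x) ∈ EFsp F := by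
  classical
  refine ⟨insert 0 ((Finset.range (q.natDegree + 1)).image fun n => n.factorial * q.coeff n),
    by simpa using q.contDiff_aeval (𝕜 := ℝ) (⊤ : ℕ∞), fun n => n.factorial * q.coeff n,
    fun n => ?_, fun x => ?_⟩
  · rcases lt_or_ge q.natDegree n with hn | hn
    · simp [q.coeff_eq_zero_of_natDegree_lt hn]
    · exact Finset.mem_insert_of_mem (Finset.mem_image_of_mem _ (by simpa [Nat.lt_succ_iff]))
  · have hterm (n : ℕ) : n.factorial * q.coeff n / n.factorial * x ^ n = q.coeff n * x ^ n := by
      rw [mul_div_cancel_left₀ _ (Nat.cast_ne_zero.2 n.factorial_ne_zero)]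
    simp only [hterm]
    rw [q.eval_eq_sum_range]
    refine hasSum_sum_of_ne_finset_zero fun n hn => ?_
    simp [q.coeff_eq_zero_of_natDegree_lt (by simpa using hn)]

lemma rho_le_of_forall_abs_sub_le {a b : ℝ} {p : ℝ≥0∞} {f g : ℝ → ℝ} {δ : ℝ} (hδ : 0 ≤ δ)
    (hfg : ∀ x ∈ Icc a b, |f x - g x| ≤ δ) :
    rho a b p f g ≤ (ENNReal.ofReal (b - a) ^ p.toReal⁻¹).toReal * δ := by
  have hbound := eLpNorm_le_of_ae_bound (μ := volume.restrict (Icc a b)) (p := p)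
    (f := fun x => f x - g x) ((ae_restrict_iff' measurableSet_Icc).2 (.of_forall hfg))
  rw [Measure.restrict_apply_univ, Real.volume_Icc] at hbound
  have hfin : ENNReal.ofReal (b - a) ^ p.toReal⁻¹ ≠ ⊤ :=
    ENNReal.rpow_ne_top_of_nonneg (by positivity) ENNReal.ofReal_ne_top
  calc rho a b p f g
      ≤ (ENNReal.ofReal (b - a) ^ p.toReal⁻¹ * ENNReal.ofReal δ).toReal :=
        ENNReal.toReal_mono (ENNReal.mul_ne_top hfin ENNReal.ofReal_ne_top) hbound
    _ = _ := by rw [ENNReal.toReal_mul, ENNReal.toReal_ofReal hδ]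

lemma exists_polynomial_rho_lt {a b : ℝ} (p : ℝ≥0∞) {f : ℝ → ℝ} (hf : ContinuousOn f (Icc a b))
    {ε : ℝ} (hε : 0 < ε) : ∃ q : ℝ[X], rho a b p f (fun x => q.eval x) < ε := by
  set K := (ENNReal.ofReal (b - a) ^ p.toReal⁻¹).toReal
  have hK : 0 < K + 1 := by positivity
  obtain ⟨q, hq⟩ := exists_polynomial_near_of_continuousOn a b f hf (ε / (K + 1)) (by positivity)
  refine ⟨q, ?_⟩
  calc rho a b p f (fun x => q.eval x) ≤ K * (ε / (K + 1)) :=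
        rho_le_of_forall_abs_sub_le (by positivity) fun x hx => by
          rw [abs_sub_comm]; exact (hq x hx).le
    _ < (K + 1) * (ε / (K + 1)) := by gcongr; linarith
    _ = ε := mul_div_cancel₀ ε hK.ne'

theorem stmt5_general (γ : ℝ) (p : ℝ≥0∞) :
    ∀ f : ℝ → ℝ, ContDiff ℝ (⊤ : ℕ∞) f →
      ∃ F : ℕ → Finset ℝ,
        (∀ n : ℕ, 2 ≤ (F n).card) ∧
        (∀ n : ℕ, EFsp (F n) ⊆ EFsp (F (n + 1))) ∧
        (∀ ε > (0 : ℝ), ∃ n : ℕ, ∃ g ∈ EFsp (F n), rho 0 γ p f g < ε) := by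
  intro f hf
  choose q hq using fun k : ℕ =>
    exists_polynomial_rho_lt p hf.continuous.continuousOn (Nat.one_div_pos_of_nat (n := k))
  choose S hS using fun k => (q k).exists_eval_mem_EFsp
  refine ⟨fun n => {0, 1} ∪ (Finset.range (n + 1)).biUnion S, fun n => ?_, fun n => ?_,
    fun ε hε => ?_⟩
  · calc 2 = ({0, 1} : Finset ℝ).card := by norm_num
      _ ≤ _ := Finset.card_le_card Finset.subset_union_left
  · exact EFsp_mono <| Finset.union_subset_union_right <|
      Finset.biUnion_subset_biUnion_of_subset_left _ (Finset.range_subset_range.2 (n + 1).le_succ)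
  · obtain ⟨k, hk⟩ := exists_nat_one_div_lt hε
    refine ⟨k, _, EFsp_mono ?_ (hS k), (hq k).trans hk⟩
    exact (Finset.subset_biUnion_of_mem S (Finset.self_mem_range_succ k)).trans
      Finset.subset_union_right

/-- Fix `γ > 0` and `1 ≤ p ≤ ∞`. Every smooth `f` on `[0, γ]` admits an
approximating filtration `{E_{F(n)}}`: there are finite sets `F(n) ⊂ ℝ` with
`2 ≤ #F(n)`, with `E_{F(n)} ⊆ E_{F(n+1)}`, and such that `f` lies in the `ρ_p`-closure
of `⋃ₙ E_{F(n)}` (i.e. for every `ε > 0` some `g` in some `E_{F(n)}` has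
`ρ_p(f, g) < ε`). -/
theorem stmt5 (γ : ℝ) (hγ : 0 < γ) (p : ℝ≥0∞) (hp : 1 ≤ p) :
    ∀ f : ℝ → ℝ, ContDiff ℝ (⊤ : ℕ∞) f →
      ∃ F : ℕ → Finset ℝ,
        (∀ n : ℕ, 2 ≤ (F n).card) ∧
        (∀ n : ℕ, EFsp (F n) ⊆ EFsp (F (n + 1))) ∧
        (∀ ε > (0 : ℝ), ∃ n : ℕ, ∃ g ∈ EFsp (F n), rho 0 γ p f g < ε) :=
  stmt5_general γ p
end

section
/- Fix γ > 0 and 1 ≤ p ≤ ∞. On the set E, the topology induced by the metric ρ_p coincides with the topology induced by the metric d_E. In particular, all the metrics ρ_p for 1 ≤ p ≤ ∞ induce the same topology on E. -/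
/-!
Write `c = a - b`, a sequence with values in `{-1, 0, 1}`. If `c` vanishes below `N`, then
`|f_a - f_b| ≤ γ^N / N! · e^γ` on `[0, γ]` and `d_E(a, b) ≤ e / N!`. Conversely, if `N` is the first
index with `c_N ≠ 0`, the term `c_N x^N / N!` dominates near `0`, so `|f_a - f_b| ≥ x^N / (2 N!)`
on a fixed interval `[η/2, η]`, which bounds `ρ_p(f_a, f_b)` from below. So
closeness for `ρ_p` and closeness for `d_E` both mean agreement on a long initial segment of
coefficients.
-/

open MeasureTheory Set Filter
open scoped ENNReal Topology

/-- A sequence taking values in `{0, 1}`. -/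
def IsBinary (a : ℕ → ℝ) : Prop := ∀ n, a n = 0 ∨ a n = 1

/-- The function `x ↦ Σ aₙ/n! xⁿ` attached to a coefficient sequence; elements of `E`
are exactly the functions `fseq a` with `a` binary. -/
noncomputable def fseq (a : ℕ → ℝ) : ℝ → ℝ :=
  fun x => ∑' n : ℕ, a n / (Nat.factorial n : ℝ) * x ^ n

/-- The metric `d_E` on `E`, expressed via the coefficient sequences:
`d_E(f, g) = Σₙ |aₙ − bₙ|/(n+1)!`. -/
noncomputable def dE (a b : ℕ → ℝ) : ℝ :=
  ∑' n : ℕ, |a n - b n| / (Nat.factorial (n + 1) : ℝ)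

open Nat Real

section Coefficients

variable {a b : ℕ → ℝ}

lemma IsBinary.abs_le_one (ha : IsBinary a) (n : ℕ) : |a n| ≤ 1 := by
  rcases ha n with h | h <;> simp [h]

lemma IsBinary.abs_sub_le_one (ha : IsBinary a) (hb : IsBinary b) (n : ℕ) :
    |a n - b n| ≤ 1 := by
  rcases ha n with h | h <;> rcases hb n with h' | h' <;> simp [h, h']

lemma IsBinary.abs_sub_eq_one (ha : IsBinary a) (hb : IsBinary b) {n : ℕ} (hn : a n ≠ b n) :
    |a n - b n| = 1 := by
  rcases ha n with h | h <;> rcases hb n with h' | h' <;> simp_all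

end Coefficients

lemma factorial_mul_factorial_le_factorial_add (m n : ℕ) : (m ! * n ! : ℝ) ≤ (m + n)! := by
  exact_mod_cast Nat.le_of_dvd (factorial_pos _) (factorial_mul_factorial_dvd_factorial_add m n)

section PowerSeries

variable {c : ℕ → ℝ}

lemma norm_coeff_div_factorial_mul_pow_le (hc : ∀ n, |c n| ≤ 1) (n : ℕ) (x : ℝ) :
    ‖c n / n ! * x ^ n‖ ≤ |x| ^ n / n ! := by
  rw [norm_mul, norm_div, norm_pow, Real.norm_eq_abs, Real.norm_eq_abs, Nat.abs_cast,
    Real.norm_eq_abs, div_mul_eq_mul_div]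
  gcongr
  exact mul_le_of_le_one_left (by positivity) (hc n)

lemma summable_fseq (hc : ∀ n, |c n| ≤ 1) (x : ℝ) :
    Summable fun n => c n / n ! * x ^ n :=
  .of_norm_bounded (Real.summable_pow_div_factorial |x|)
    (norm_coeff_div_factorial_mul_pow_le hc · x)

lemma fseq_sub_fseq {a b : ℕ → ℝ} (ha : ∀ n, |a n| ≤ 1) (hb : ∀ n, |b n| ≤ 1) (x : ℝ) :
    fseq a x - fseq b x = fseq (a - b) x := by
  rw [fseq, fseq, ← (summable_fseq ha x).tsum_sub (summable_fseq hb x), fseq]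
  congr 1 with n
  simp only [Pi.sub_apply]
  ring

/-- The remainder after the first `N` terms is dominated by the tail of the exponential series,
and `(n + N)! ≥ n! N!` bounds that tail by `|x|^N / N! · e^{|x|}`. -/
lemma abs_fseq_sub_sum_range_le (hc : ∀ n, |c n| ≤ 1) (N : ℕ) (x : ℝ) :
    |fseq c x - ∑ n ∈ Finset.range N, c n / n ! * x ^ n| ≤ |x| ^ N / N ! * exp |x| := by
  rw [fseq, ← (summable_fseq hc x).sum_add_tsum_nat_add N, add_sub_cancel_left]
  have hexp : HasSum (fun n => |x| ^ n / n !) (exp |x|) := by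
    rw [Real.exp_eq_exp_ℝ]; exact NormedSpace.expSeries_div_hasSum_exp |x|
  rw [← Real.norm_eq_abs]
  refine tsum_of_norm_bounded (hexp.mul_left (|x| ^ N / N !)) fun n => ?_
  calc ‖c (n + N) / (n + N)! * x ^ (n + N)‖ ≤ |x| ^ (n + N) / (n + N)! :=
        norm_coeff_div_factorial_mul_pow_le hc _ x
    _ ≤ |x| ^ (n + N) / (N ! * n !) := by
        gcongr
        rw [add_comm n]
        exact factorial_mul_factorial_le_factorial_add N n
    _ = |x| ^ N / N ! * (|x| ^ n / n !) := by
        rw [pow_add]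
        field_simp

lemma abs_fseq_le_of_eq_zero (hc : ∀ n, |c n| ≤ 1) {N : ℕ} (hN : ∀ n < N, c n = 0) (x : ℝ) :
    |fseq c x| ≤ |x| ^ N / N ! * exp |x| := by
  have hsum : ∑ n ∈ Finset.range N, c n / n ! * x ^ n = 0 :=
    Finset.sum_eq_zero fun n hn => by simp [hN n (Finset.mem_range.mp hn)]
  simpa [hsum] using abs_fseq_sub_sum_range_le hc N x

/-- Near `0` the first nonzero term dominates: the remainder is at most `|x| e^{|x|} ≤ 1/2`
times it. -/
lemma pow_div_le_abs_fseq (hc : ∀ n, |c n| ≤ 1) {N : ℕ} (hN : ∀ n < N, c n = 0)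
    (hcN : |c N| = 1) {x : ℝ} (hx : |x| ≤ 4⁻¹) :
    |x| ^ N / (2 * N !) ≤ |fseq c x| := by
  have hhead : ∑ n ∈ Finset.range (N + 1), c n / n ! * x ^ n = c N / N ! * x ^ N := by
    rw [Finset.sum_range_succ, Finset.sum_eq_zero, zero_add]
    intro n hn
    simp [hN n (Finset.mem_range.mp hn)]
  have hrem := abs_fseq_sub_sum_range_le hc (N + 1) x
  rw [hhead] at hrem
  have hexp : exp |x| ≤ 2 :=
    calc exp |x| ≤ 1 / (1 - |x|) := exp_bound_div_one_sub_of_interval (abs_nonneg x) (by linarith)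
      _ ≤ 2 := by rw [div_le_iff₀ (by linarith)]; linarith
  have hfact : (N ! : ℝ) ≤ (N + 1)! := by exact_mod_cast factorial_le N.le_succ
  have hsmall : |x| ^ (N + 1) / (N + 1)! * exp |x| ≤ |x| ^ N / N ! / 2 := by
    calc |x| ^ (N + 1) / (N + 1)! * exp |x| ≤ |x| ^ N * |x| / N ! * 2 := by
          rw [pow_succ]; gcongr
      _ ≤ |x| ^ N * 4⁻¹ / N ! * 2 := by gcongr
      _ = |x| ^ N / N ! / 2 := by ring
  have hlead : |c N / N ! * x ^ N| = |x| ^ N / N ! := by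
    rw [abs_mul, abs_div, hcN, abs_pow, Nat.abs_cast, one_div_mul_eq_div]
  have := abs_sub_abs_le_abs_sub (c N / N ! * x ^ N) (fseq c x)
  rw [abs_sub_comm] at this
  rw [mul_comm 2, ← div_div]
  linarith

end PowerSeries

section CoefficientDistance

variable {a b : ℕ → ℝ}

lemma summable_dE (hab : ∀ n, |a n - b n| ≤ 1) :
    Summable fun n => |a n - b n| / (n + 1)! := by
  refine .of_nonneg_of_le (fun n => by positivity) (fun n => ?_)
    ((summable_nat_add_iff 1).mpr (Real.summable_pow_div_factorial 1))
  rw [one_pow]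
  gcongr
  exact hab n

lemma dE_le_exp_one_div_factorial (hab : ∀ n, |a n - b n| ≤ 1) {N : ℕ} (hN : ∀ n < N, a n = b n) :
    dE a b ≤ exp 1 / N ! := by
  have hhead : ∑ n ∈ Finset.range N, |a n - b n| / (n + 1)! = 0 :=
    Finset.sum_eq_zero fun n hn => by simp [hN n (Finset.mem_range.mp hn)]
  have hexp : HasSum (fun n => (1 : ℝ) ^ n / n !) (exp 1) := by
    rw [Real.exp_eq_exp_ℝ]; exact NormedSpace.expSeries_div_hasSum_exp 1
  rw [dE, ← (summable_dE hab).sum_add_tsum_nat_add N, hhead, zero_add, ← one_mul (exp 1),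
    ← div_mul_eq_mul_div]
  refine (Real.le_norm_self _).trans <|
    tsum_of_norm_bounded (hexp.mul_left (1 / (N ! : ℝ))) fun n => ?_
  rw [Real.norm_of_nonneg (by positivity), one_pow, one_div_mul_one_div]
  calc |a (n + N) - b (n + N)| / (n + N + 1)! ≤ 1 / (n + N)! := by
        gcongr ?_ / ?_
        · exact hab _
        · exact_mod_cast factorial_le (by omega)
    _ ≤ 1 / (N ! * n !) := by
        gcongr
        rw [add_comm n]
        exact factorial_mul_factorial_le_factorial_add N n

lemma one_div_factorial_le_dE (ha : IsBinary a) (hb : IsBinary b) {n : ℕ} (hn : a n ≠ b n) :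
    1 / (n + 1)! ≤ dE a b := by
  have := (summable_dE (ha.abs_sub_le_one hb)).le_tsum n fun _ _ => by positivity
  rwa [ha.abs_sub_eq_one hb hn] at this

lemma eq_of_dE_lt (ha : IsBinary a) (hb : IsBinary b) {N : ℕ} (h : dE a b < 1 / N !) :
    ∀ n < N, a n = b n := by
  intro n hn
  by_contra hne
  have : (1 : ℝ) / N ! ≤ 1 / (n + 1)! := by
    gcongr
    exact hn
  linarith [one_div_factorial_le_dE ha hb hne]

end CoefficientDistance

section LpDistance

variable {γ : ℝ} {p : ℝ≥0∞} {a b : ℕ → ℝ}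

lemma rho_fseq (ha : IsBinary a) (hb : IsBinary b) (s t : ℝ) :
    rho s t p (fseq a) (fseq b) =
      (eLpNorm (fseq (a - b)) p (volume.restrict (Icc s t))).toReal := by
  rw [rho]
  congr 2 with x
  exact fseq_sub_fseq ha.abs_le_one hb.abs_le_one x

lemma eLpNorm_fseq_le {c : ℕ → ℝ} (hc : ∀ n, |c n| ≤ 1) {N : ℕ} (hN : ∀ n < N, c n = 0) :
    eLpNorm (fseq c) p (volume.restrict (Icc 0 γ))
      ≤ ENNReal.ofReal γ ^ p.toReal⁻¹ * ENNReal.ofReal (γ ^ N / N ! * exp γ) := by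
  have hbound : ∀ᵐ x ∂volume.restrict (Icc 0 γ), ‖fseq c x‖ ≤ γ ^ N / N ! * exp γ := by
    refine (ae_restrict_mem measurableSet_Icc).mono fun x hx => ?_
    have hxγ : |x| ≤ γ := by rw [abs_of_nonneg hx.1]; exact hx.2
    calc ‖fseq c x‖ ≤ |x| ^ N / N ! * exp |x| := abs_fseq_le_of_eq_zero hc hN x
      _ ≤ γ ^ N / N ! * exp γ := by
          have hγ : 0 ≤ γ := hx.1.trans hx.2
          exact mul_le_mul (by gcongr) (by gcongr) (by positivity) (by positivity)
  simpa [Real.volume_Icc] using eLpNorm_le_of_ae_bound (p := p) hbound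

lemma rho_fseq_le (hγ : 0 ≤ γ) (ha : IsBinary a) (hb : IsBinary b) {N : ℕ}
    (hN : ∀ n < N, a n = b n) :
    rho 0 γ p (fseq a) (fseq b) ≤ γ ^ p.toReal⁻¹ * (γ ^ N / N ! * exp γ) := by
  have hle := eLpNorm_fseq_le (p := p) (γ := γ) (ha.abs_sub_le_one hb)
    (fun n hn => sub_eq_zero.mpr (hN n hn))
  rw [rho_fseq ha hb]
  refine (ENNReal.toReal_mono (by finiteness) hle).trans_eq ?_
  rw [ENNReal.toReal_mul, ← ENNReal.toReal_rpow, ENNReal.toReal_ofReal hγ,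
    ENNReal.toReal_ofReal (by positivity)]

lemma pow_div_le_abs_fseq_sub (ha : IsBinary a) (hb : IsBinary b) {N : ℕ}
    (hne : ∃ n ≤ N, a n ≠ b n) {x : ℝ} (hx : |x| ≤ 4⁻¹) :
    |x| ^ N / (2 * N !) ≤ |fseq (a - b) x| := by
  classical
  obtain ⟨m, hmN, hm⟩ := hne
  have hex : ∃ n, a n ≠ b n := ⟨m, hm⟩
  set n₀ := Nat.find hex
  have hn₀N : n₀ ≤ N := (Nat.find_min' hex hm).trans hmN
  have hbelow : ∀ n < n₀, (a - b) n = 0 := fun n hn =>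
    sub_eq_zero.mpr (not_not.mp (Nat.find_min hex hn))
  calc |x| ^ N / (2 * N !) ≤ |x| ^ n₀ / (2 * n₀ !) := by
        refine div_le_div₀ (by positivity) ?_ (by positivity) ?_
        · exact pow_le_pow_of_le_one (abs_nonneg x) (by linarith) hn₀N
        · gcongr
    _ ≤ |fseq (a - b) x| :=
        pow_div_le_abs_fseq (ha.abs_sub_le_one hb) hbelow
          (ha.abs_sub_eq_one hb (Nat.find_spec hex)) hx

lemma exists_pos_le_rho (hγ : 0 < γ) (hp : p ≠ 0) (N : ℕ) :
    ∃ δ > 0, ∀ a b, IsBinary a → IsBinary b → (∃ n ≤ N, a n ≠ b n) →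
      δ ≤ rho 0 γ p (fseq a) (fseq b) := by
  set η := min γ 4⁻¹
  have hη : 0 < η := lt_min hγ (by norm_num)
  set S := Icc (η / 2) η
  set m := (η / 2) ^ N / (2 * N !)
  have hμS : volume.restrict S ≠ 0 := by
    simp [S, Measure.restrict_eq_zero, Real.volume_Icc, hη]
  refine ⟨(eLpNorm (fun _ => m) p (volume.restrict S)).toReal, ?_, fun a b ha hb hne => ?_⟩
  · rw [eLpNorm_const _ hp hμS]
    have hm : 0 < m := div_pos (pow_pos (half_pos hη) N) (by positivity)
    simp only [S, Measure.restrict_apply_univ, Real.volume_Icc, ENNReal.toReal_mul, toReal_enorm,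
      ← ENNReal.toReal_rpow, ENNReal.toReal_ofReal (by linarith : 0 ≤ η - η / 2)]
    exact mul_pos (abs_pos.mpr hm.ne') (Real.rpow_pos_of_pos (by linarith) _)
  have hpt : ∀ x ∈ S, ‖m‖ ≤ ‖fseq (a - b) x‖ := by
    intro x hx
    have hx0 : 0 ≤ x := (half_pos hη).le.trans hx.1
    have hx4 : |x| ≤ 4⁻¹ := by rw [abs_of_nonneg hx0]; exact hx.2.trans (min_le_right _ _)
    rw [Real.norm_of_nonneg (by positivity), Real.norm_eq_abs]
    refine le_trans ?_ (pow_div_le_abs_fseq_sub ha hb hne hx4)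
    rw [abs_of_nonneg hx0]
    show (η / 2) ^ N / (2 * N !) ≤ x ^ N / (2 * N !)
    gcongr
    exact hx.1
  have hSsub : S ⊆ Icc 0 γ := Icc_subset_Icc (half_pos hη).le (min_le_left _ _)
  rw [rho_fseq ha hb]
  refine ENNReal.toReal_mono (ne_top_of_le_ne_top (by finiteness)
    (eLpNorm_fseq_le (ha.abs_sub_le_one hb) (N := 0) (by simp))) ?_
  calc eLpNorm (fun _ => m) p (volume.restrict S) ≤ eLpNorm (fseq (a - b)) p (volume.restrict S) :=
        eLpNorm_mono_ae ((ae_restrict_mem measurableSet_Icc).mono hpt)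
    _ ≤ eLpNorm (fseq (a - b)) p (volume.restrict (Icc 0 γ)) :=
        eLpNorm_mono_measure _ (Measure.restrict_mono hSsub le_rfl)

end LpDistance

/-- Continuity of the identity `(E, d) → (E, d')`, in ε-δ form; points of `E` are encoded by
their binary coefficient sequences. -/
def IdContinuousOnBinary (d d' : (ℕ → ℝ) → (ℕ → ℝ) → ℝ) : Prop :=
  ∀ a, IsBinary a → ∀ ε > (0 : ℝ), ∃ δ > (0 : ℝ), ∀ b, IsBinary b → d a b < δ → d' a b < ε

lemma IdContinuousOnBinary.trans {d d' d'' : (ℕ → ℝ) → (ℕ → ℝ) → ℝ}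
    (h : IdContinuousOnBinary d d') (h' : IdContinuousOnBinary d' d'') :
    IdContinuousOnBinary d d'' := by
  intro a ha ε hε
  obtain ⟨δ', hδ', hd'⟩ := h' a ha ε hε
  obtain ⟨δ, hδ, hd⟩ := h a ha δ' hδ'
  exact ⟨δ, hδ, fun b hb hab => hd' b hb (hd b hb hab)⟩

section Topologies

variable {γ : ℝ} {p : ℝ≥0∞}

theorem idContinuousOnBinary_rho_dE (hγ : 0 < γ) (hp : p ≠ 0) :
    IdContinuousOnBinary (fun a b => rho 0 γ p (fseq a) (fseq b)) dE := by
  intro a ha ε hε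
  have htend : Tendsto (fun N : ℕ => exp 1 / N !) atTop (𝓝 0) := by
    simpa [div_eq_mul_inv, mul_comm] using
      (FloorSemiring.tendsto_pow_div_factorial_atTop (1 : ℝ)).const_mul (exp 1)
  obtain ⟨N, hN⟩ := (htend.eventually (gt_mem_nhds hε)).exists
  obtain ⟨δ, hδ, hsep⟩ := exists_pos_le_rho hγ hp N
  refine ⟨δ, hδ, fun b hb hlt => ?_⟩
  have hagree : ∀ n ≤ N, a n = b n := by
    by_contra! hne
    exact (hsep a b ha hb hne).not_gt hlt
  exact (dE_le_exp_one_div_factorial (ha.abs_sub_le_one hb) fun n hn => hagree n hn.le).trans_lt hN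

theorem idContinuousOnBinary_dE_rho (hγ : 0 ≤ γ) (p : ℝ≥0∞) :
    IdContinuousOnBinary dE (fun a b => rho 0 γ p (fseq a) (fseq b)) := by
  intro a ha ε hε
  have htend : Tendsto (fun N : ℕ => γ ^ p.toReal⁻¹ * (γ ^ N / N ! * exp γ)) atTop (𝓝 0) := by
    simpa using
      ((FloorSemiring.tendsto_pow_div_factorial_atTop γ).mul_const (exp γ)).const_mul _
  obtain ⟨N, hN⟩ := (htend.eventually (gt_mem_nhds hε)).exists
  exact ⟨1 / N !, by positivity, fun b hb hlt =>
    (rho_fseq_le hγ ha hb (eq_of_dE_lt ha hb hlt)).trans_lt hN⟩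

end Topologies

/-- Fix `γ > 0` and `1 ≤ p ≤ ∞`. On `E` the topology induced by
`ρ_p` coincides with the topology induced by `d_E` (the identity map is continuous in
both directions, in ε-δ form); in particular, for any `1 ≤ q ≤ ∞` the metrics `ρ_p`
and `ρ_q` induce the same topology on `E`. -/
theorem stmt19 (γ : ℝ) (hγ : 0 < γ) (p : ℝ≥0∞) (hp : 1 ≤ p) :
    ((∀ a : ℕ → ℝ, IsBinary a → ∀ ε > (0 : ℝ), ∃ δ > (0 : ℝ),
      ∀ b : ℕ → ℝ, IsBinary b →
        rho 0 γ p (fseq a) (fseq b) < δ → dE a b < ε) ∧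
    (∀ a : ℕ → ℝ, IsBinary a → ∀ ε > (0 : ℝ), ∃ δ > (0 : ℝ),
      ∀ b : ℕ → ℝ, IsBinary b →
        dE a b < δ → rho 0 γ p (fseq a) (fseq b) < ε)) ∧
    (∀ q : ℝ≥0∞, 1 ≤ q →
      ∀ a : ℕ → ℝ, IsBinary a → ∀ ε > (0 : ℝ), ∃ δ > (0 : ℝ),
        ∀ b : ℕ → ℝ, IsBinary b →
          rho 0 γ p (fseq a) (fseq b) < δ → rho 0 γ q (fseq a) (fseq b) < ε) := by
  have hrho_dE := idContinuousOnBinary_rho_dE hγ (zero_lt_one.trans_le hp).ne'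
  exact ⟨⟨hrho_dE, idContinuousOnBinary_dE_rho hγ.le p⟩,
    fun q _ => hrho_dE.trans (idContinuousOnBinary_dE_rho hγ.le q)⟩
end
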